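/- arXiv:1509.09286 — 2 statements merged into one kernel-verified Lean document; each statement's English description precedes it below -/
import Mathlib

section
/- Let α > 0 and β > −1/2. Define for n > 0 the optimized hyperrectangle risk R_o(n) = (Σ_{i=1}^{d} i^β)²/(n + Σ_{i=1}^{d} i^{2α+2β+1}) + Σ_{i=d+1}^{∞} i^{−(2α+1)}, where d = d_o(n) = max{k : Σ_{i=1}^{k} i^β(k^{2α+β+1} − i^{2α+β+1}) ≤ n}. Then R_o(n) ∼ B_H · n^{−α/(α+β+1)} as n → ∞, where B_H = ((2α+β+1)/(2α(β+1))) · ((2α+β+1)/(2(β+1)(α+β+1)))^{α/(α+β+1)}. -/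
open Filter Finset Topology

/-!
Write `d = d_o(n)` and `m = 2α + 2β + 2`. Comparing sums with integrals gives
`∑_{i ≤ k} i^r ∼ k^(r+1)/(r+1)` for `r > -1`, so the budget threshold
`∑_{i ≤ k} i^β (k^p - i^p)`, `p = 2α + β + 1`, is asymptotic to `L k^m` with
`L = 1/(β+1) - 1/m`; as `d` is the largest `k` whose threshold is at most `n`, this gives
`n ∼ L d^m`. The same power-sum asymptotics make the first term of `R_o(n)` asymptotic to
`d^(-2α)/(β+1)`, and the integral test makes the tail asymptotic to `d^(-2α)/(2α)`. Hence
`R_o(n) ∼ (1/(β+1) + 1/(2α)) d^(-2α) ∼ (1/(β+1) + 1/(2α)) (n/L)^(-2α/m)`,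
which is `B_H n^(-α/(α+β+1))`.
-/

theorem sum_Icc_mem_Icc_integral {f : ℝ → ℝ} {k : ℕ} (hk : 1 ≤ k)
    (hf0 : ∀ i : ℕ, 0 ≤ f i) (hf : MonotoneOn f (Set.Icc 1 k) ∨ AntitoneOn f (Set.Icc 1 k)) :
    ∑ i ∈ Icc 1 k, f i ∈
      Set.Icc (∫ x in (1 : ℝ)..k, f x) ((∫ x in (1 : ℝ)..k, f x) + f 1 + f k) := by
  have hIcc : Icc 1 k = Ico 1 (k + 1) := (Finset.Ico_add_one_right_eq_Icc 1 k).symm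
  have htop : ∑ i ∈ Icc 1 k, f i = ∑ i ∈ Ico 1 k, f i + f k := by
    rw [hIcc, sum_Ico_succ_top hk]
  have hbot : ∑ i ∈ Icc 1 k, f i = f 1 + ∑ i ∈ Ico 1 k, f ↑(i + 1) := by
    rw [hIcc, sum_eq_sum_Ico_succ_bot (by omega), sum_Ico_add' (fun i : ℕ => f i)]
    norm_num
  have hf1 : 0 ≤ f 1 := by exact_mod_cast hf0 1
  have hfk := hf0 k
  rcases hf with hf | hf
  · have hlo := MonotoneOn.integral_le_sum_Ico (a := 1) hk (by exact_mod_cast hf)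
    have hhi := MonotoneOn.sum_le_integral_Ico (a := 1) hk (by exact_mod_cast hf)
    rw [Nat.cast_one] at hlo hhi
    constructor <;> linarith
  · have hlo := AntitoneOn.integral_le_sum_Ico (a := 1) hk (by exact_mod_cast hf)
    have hhi := AntitoneOn.sum_le_integral_Ico (a := 1) hk (by exact_mod_cast hf)
    rw [Nat.cast_one] at hlo hhi
    constructor <;> linarith

theorem tendsto_sum_Icc_rpow_div_rpow {r : ℝ} (hr : -1 < r) :
    Tendsto (fun k : ℕ => (∑ i ∈ Icc 1 k, (i : ℝ) ^ r) / (k : ℝ) ^ (r + 1)) atTop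
      (𝓝 (r + 1)⁻¹) := by
  have hr1 : 0 < r + 1 := by linarith
  have hK : Tendsto (fun k : ℕ => ((k : ℝ) ^ (r + 1))⁻¹) atTop (𝓝 0) :=
    ((tendsto_rpow_atTop hr1).comp tendsto_natCast_atTop_atTop).inv_tendsto_atTop
  have hk : Tendsto (fun k : ℕ => (k : ℝ)⁻¹) atTop (𝓝 0) :=
    tendsto_inv_atTop_zero.comp tendsto_natCast_atTop_atTop
  have hlow : Tendsto (fun k : ℕ => (r + 1)⁻¹ * (1 - ((k : ℝ) ^ (r + 1))⁻¹)) atTop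
      (𝓝 (r + 1)⁻¹) := by
    simpa using ((tendsto_const_nhds (x := (1 : ℝ))).sub hK).const_mul (r + 1)⁻¹
  have hup : Tendsto (fun k : ℕ => (r + 1)⁻¹ * (1 - ((k : ℝ) ^ (r + 1))⁻¹) +
      ((k : ℝ) ^ (r + 1))⁻¹ + (k : ℝ)⁻¹) atTop (𝓝 (r + 1)⁻¹) := by
    simpa using (hlow.add hK).add hk
  have hbounds : ∀ k : ℕ, 1 ≤ k → ∑ i ∈ Icc 1 k, (i : ℝ) ^ r ∈
      Set.Icc (((k : ℝ) ^ (r + 1) - 1) / (r + 1))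
        (((k : ℝ) ^ (r + 1) - 1) / (r + 1) + 1 + (k : ℝ) ^ r) := by
    intro k hk
    have hmono : MonotoneOn (fun x : ℝ => x ^ r) (Set.Icc 1 k) ∨
        AntitoneOn (fun x : ℝ => x ^ r) (Set.Icc 1 k) := by
      rcases le_total 0 r with h | h
      · exact .inl ((Real.monotoneOn_rpow_Ici_of_exponent_nonneg h).mono
          fun x hx => le_trans zero_le_one hx.1)
      · exact .inr ((Real.antitoneOn_rpow_Ioi_of_exponent_nonpos h).mono
          fun x hx => lt_of_lt_of_le one_pos hx.1)
    simpa [integral_rpow (Or.inl hr)] using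
      sum_Icc_mem_Icc_integral hk (fun i => Real.rpow_nonneg i.cast_nonneg r) hmono
  refine tendsto_of_tendsto_of_tendsto_of_le_of_le' hlow hup ?_ ?_ <;>
    filter_upwards [eventually_ge_atTop 1] with k hk <;>
    have hk0 : (0 : ℝ) < k := by exact_mod_cast hk
  · rw [le_div_iff₀ (by positivity)]
    convert (hbounds k hk).1 using 1
    field_simp
  · rw [div_le_iff₀ (by positivity)]
    convert (hbounds k hk).2 using 1
    rw [Real.rpow_add_one hk0.ne']
    field_simp

theorem tsum_rpow_tail_mem_Icc {s : ℝ} (hs : 0 < s) {d : ℕ} (hd : 0 < d) :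
    ∑' j : ℕ, ((j : ℝ) + d + 1) ^ (-(s + 1)) ∈
      Set.Icc (((d : ℝ) + 1) ^ (-s) / s) ((d : ℝ) ^ (-s) / s) := by
  have hexp : -(s + 1) < -1 := by linarith
  have hanti (N : ℕ) (hN : 0 < N) :
      AntitoneOn (fun x : ℝ => x ^ (-(s + 1))) (Set.Ici (N : ℝ)) :=
    (Real.antitoneOn_rpow_Ioi_of_exponent_nonpos (by linarith)).mono
      fun x hx => Set.mem_Ioi.mpr (lt_of_lt_of_le (by exact_mod_cast hN) hx)
  have hnonneg (N : ℕ) : ∀ t ∈ Set.Ioi (N : ℝ), 0 ≤ t ^ (-(s + 1)) :=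
    fun t ht => Real.rpow_nonneg ((Nat.cast_nonneg N).trans ht.le) _
  have hint (N : ℕ) (hN : 0 < N) :
      ∫ x in Set.Ioi (N : ℝ), x ^ (-(s + 1)) = (N : ℝ) ^ (-s) / s := by
    rw [integral_Ioi_rpow_of_lt hexp (by exact_mod_cast hN),
      show -(s + 1) + 1 = -s by ring, neg_div_neg_eq]
  have hupper := AntitoneOn.tsum_comp_add_le_integral d (hanti d hd)
    (integrableOn_Ioi_rpow_of_lt hexp (by exact_mod_cast hd)) (hnonneg d)
  have hlower := AntitoneOn.integral_le_tsum_comp_add (d + 1) (hanti (d + 1) d.succ_pos)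
    (Real.summable_nat_rpow.mpr hexp) (hnonneg (d + 1))
  rw [hint d hd] at hupper
  rw [hint (d + 1) d.succ_pos] at hlower
  push_cast at hupper hlower
  simp only [← add_assoc] at hlower
  exact ⟨hlower, hupper⟩

theorem tendsto_rpow_mul_tsum_rpow_tail {s : ℝ} (hs : 0 < s) :
    Tendsto (fun d : ℕ => (d : ℝ) ^ s * ∑' j : ℕ, ((j : ℝ) + d + 1) ^ (-(s + 1))) atTop
      (𝓝 s⁻¹) := by
  have hratio : Tendsto (fun d : ℕ => ((d : ℝ) / (d + 1)) ^ s / s) atTop (𝓝 s⁻¹) := by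
    have h := ((Real.continuousAt_rpow_const 1 s (Or.inl one_ne_zero)).tendsto.comp
      (tendsto_natCast_div_add_atTop (1 : ℝ))).div_const s
    simpa [Function.comp_def] using h
  refine tendsto_of_tendsto_of_tendsto_of_le_of_le' hratio tendsto_const_nhds ?_ ?_ <;>
    filter_upwards [eventually_gt_atTop 0] with d hd <;>
    have hd0 : (0 : ℝ) < d := by exact_mod_cast hd
  · calc ((d : ℝ) / (d + 1)) ^ s / s = (d : ℝ) ^ s * (((d : ℝ) + 1) ^ (-s) / s) := by
          rw [Real.div_rpow hd0.le (by positivity), Real.rpow_neg (by positivity)]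
          ring
      _ ≤ _ := by gcongr; exact (tsum_rpow_tail_mem_Icc hs hd).1
  · calc _ ≤ (d : ℝ) ^ s * ((d : ℝ) ^ (-s) / s) := by
          gcongr; exact (tsum_rpow_tail_mem_Icc hs hd).2
      _ = s⁻¹ := by
          rw [Real.rpow_neg hd0.le]
          field_simp

section InverseOfThreshold

variable {f : ℕ → ℝ}

theorem bddAbove_setOf_le (hf : Tendsto f atTop atTop) (x : ℝ) : BddAbove {k | f k ≤ x} := by
  obtain ⟨K, hK⟩ := (hf.eventually_gt_atTop x).exists_forall_of_atTop
  exact ⟨K, fun k hk => not_lt.mp fun hlt => (hK k hlt.le).not_ge hk⟩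

theorem le_and_lt_apply_sSup_setOf_le (hf : Tendsto f atTop atTop) {x : ℝ} (hx : f 0 ≤ x) :
    f (sSup {k | f k ≤ x}) ≤ x ∧ x < f (sSup {k | f k ≤ x} + 1) := by
  refine ⟨Nat.sSup_mem ⟨0, hx⟩ (bddAbove_setOf_le hf x), lt_of_not_ge fun hle => ?_⟩
  have := le_csSup (bddAbove_setOf_le hf x) (show _ ∈ {k | f k ≤ x} from hle)
  omega

theorem tendsto_sSup_setOf_le (hf : Tendsto f atTop atTop) :
    Tendsto (fun x => sSup {k | f k ≤ x}) atTop atTop :=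
  tendsto_atTop.mpr fun K => (eventually_ge_atTop (f K)).mono fun _ hx =>
    le_csSup (bddAbove_setOf_le hf _) hx

theorem tendsto_atTop_of_tendsto_div_rpow {m L : ℝ} (hm : 0 < m) (hL : 0 < L)
    (hf : Tendsto (fun k : ℕ => f k / (k : ℝ) ^ m) atTop (𝓝 L)) : Tendsto f atTop atTop := by
  have hpow := (tendsto_rpow_atTop hm).comp tendsto_natCast_atTop_atTop
  refine (hf.pos_mul_atTop hL hpow).congr' ?_
  filter_upwards [eventually_gt_atTop 0] with k hk
  have : (0 : ℝ) < (k : ℝ) ^ m := by positivity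
  simp only [Function.comp_apply]
  field_simp

theorem tendsto_div_rpow_sSup_setOf_le {m L : ℝ} (hm : 0 < m) (hL : 0 < L)
    (hf : Tendsto (fun k : ℕ => f k / (k : ℝ) ^ m) atTop (𝓝 L)) :
    Tendsto (fun x => x / ((sSup {k | f k ≤ x} : ℕ) : ℝ) ^ m) atTop (𝓝 L) := by
  have hf_top := tendsto_atTop_of_tendsto_div_rpow hm hL hf
  have hd := tendsto_sSup_setOf_le hf_top
  have hshift : Tendsto (fun k : ℕ => f (k + 1) / (k : ℝ) ^ m) atTop (𝓝 L) := by
    have hratio : Tendsto (fun k : ℕ => ((k : ℝ) / (k + 1)) ^ m) atTop (𝓝 1) := by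
      simpa [Function.comp_def] using
        (Real.continuousAt_rpow_const 1 m (Or.inl one_ne_zero)).tendsto.comp
          (tendsto_natCast_div_add_atTop (1 : ℝ))
    refine (div_one L ▸ (hf.comp (tendsto_add_atTop_nat 1)).div hratio one_ne_zero).congr' ?_
    filter_upwards [eventually_gt_atTop 0] with k hk
    have hk0 : (0 : ℝ) < k := by exact_mod_cast hk
    simp only [Function.comp_apply, Nat.cast_add, Nat.cast_one, Pi.div_apply]
    rw [Real.div_rpow hk0.le (by positivity)]
    have : (0 : ℝ) < ((k : ℝ) + 1) ^ m := by positivity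
    field_simp
  refine tendsto_of_tendsto_of_tendsto_of_le_of_le' (hf.comp hd) (hshift.comp hd) ?_ ?_ <;>
    filter_upwards [hd.eventually_gt_atTop 0, eventually_ge_atTop (f 0)] with x hdx hx <;>
    obtain ⟨hle, hlt⟩ := le_and_lt_apply_sSup_setOf_le hf_top hx
  · exact div_le_div_of_nonneg_right hle (by positivity)
  · exact div_le_div_of_nonneg_right hlt.le (by positivity)

end InverseOfThreshold

/-- `d_o(n)` is the largest `k` with `budgetThreshold β (2 * α + β + 1) k ≤ n`. -/
noncomputable def budgetThreshold (β p : ℝ) (k : ℕ) : ℝ :=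
  ∑ i ∈ Icc 1 k, (i : ℝ) ^ β * ((k : ℝ) ^ p - (i : ℝ) ^ p)

theorem tendsto_budgetThreshold_div_rpow {β p : ℝ} (hβ : -1 < β) (hpβ : -1 < p + β) :
    Tendsto (fun k => budgetThreshold β p k / (k : ℝ) ^ (p + β + 1)) atTop
      (𝓝 ((β + 1)⁻¹ - (p + β + 1)⁻¹)) := by
  refine ((tendsto_sum_Icc_rpow_div_rpow hβ).sub (tendsto_sum_Icc_rpow_div_rpow hpβ)).congr' ?_
  filter_upwards [eventually_gt_atTop 0] with k hk
  have hk0 : (0 : ℝ) < k := by exact_mod_cast hk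
  have hsplit : budgetThreshold β p k =
      (k : ℝ) ^ p * ∑ i ∈ Icc 1 k, (i : ℝ) ^ β - ∑ i ∈ Icc 1 k, (i : ℝ) ^ (p + β) := by
    rw [budgetThreshold, mul_sum, ← sum_sub_distrib]
    refine sum_congr rfl fun i hi => ?_
    have hi0 : (0 : ℝ) < i := by exact_mod_cast (mem_Icc.mp hi).1
    rw [Real.rpow_add hi0]
    ring
  rw [hsplit, sub_div, show p + β + 1 = p + (β + 1) by ring, Real.rpow_add hk0 p (β + 1),
    mul_div_mul_left _ _ (by positivity)]

theorem tendsto_sq_sum_rpow_div_add_sum_rpow_mul_rpow {ι : Type*} {l : Filter ι} {α β L : ℝ}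
    (hβ : -1 < β) (hαβ : -1 < α + β) {d : ι → ℕ} {x : ι → ℝ} (hd : Tendsto d l atTop)
    (hx : Tendsto (fun i => x i / (d i : ℝ) ^ (2 * α + 2 * β + 2)) l (𝓝 L))
    (hL : L + (2 * α + 2 * β + 2)⁻¹ ≠ 0) :
    Tendsto (fun i => (∑ j ∈ Icc 1 (d i), (j : ℝ) ^ β) ^ 2 /
        (x i + ∑ j ∈ Icc 1 (d i), (j : ℝ) ^ (2 * α + 2 * β + 1)) * (d i : ℝ) ^ (2 * α)) l
      (𝓝 ((β + 1)⁻¹ ^ 2 / (L + (2 * α + 2 * β + 2)⁻¹))) := by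
  have hlow := (tendsto_sum_Icc_rpow_div_rpow hβ).comp hd
  have hhigh := (tendsto_sum_Icc_rpow_div_rpow (r := 2 * α + 2 * β + 1) (by linarith)).comp hd
  rw [show 2 * α + 2 * β + 1 + 1 = 2 * α + 2 * β + 2 by ring] at hhigh
  refine ((hlow.pow 2).div (hx.add hhigh) hL).congr' ?_
  filter_upwards [hd.eventually_gt_atTop 0] with i hi
  have hD : (0 : ℝ) < d i := by exact_mod_cast hi
  have hpow :
      (d i : ℝ) ^ (2 * α + 2 * β + 2) = ((d i : ℝ) ^ (β + 1)) ^ 2 * (d i : ℝ) ^ (2 * α) := by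
    rw [← Real.rpow_natCast, ← Real.rpow_mul hD.le, ← Real.rpow_add hD]
    ring_nf
  simp only [Function.comp_apply, Pi.div_apply]
  rw [div_pow, ← add_div, hpow]
  have : (0 : ℝ) < (d i : ℝ) ^ (β + 1) := by positivity
  have : (0 : ℝ) < (d i : ℝ) ^ (2 * α) := by positivity
  field_simp

theorem tendsto_risk_mul_rpow {ι : Type*} {l : Filter ι} {α β L : ℝ} (hα : 0 < α)
    (hβ : -1 < β) {d : ι → ℕ} {x : ι → ℝ} (hd : Tendsto d l atTop)
    (hx : Tendsto (fun i => x i / (d i : ℝ) ^ (2 * α + 2 * β + 2)) l (𝓝 L)) (hL : 0 ≤ L) :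
    Tendsto (fun i => ((∑ j ∈ Icc 1 (d i), (j : ℝ) ^ β) ^ 2 /
        (x i + ∑ j ∈ Icc 1 (d i), (j : ℝ) ^ (2 * α + 2 * β + 1)) +
        ∑' j : ℕ, ((j : ℝ) + d i + 1) ^ (-(2 * α + 1))) * (d i : ℝ) ^ (2 * α)) l
      (𝓝 ((β + 1)⁻¹ ^ 2 / (L + (2 * α + 2 * β + 2)⁻¹) + (2 * α)⁻¹)) := by
  have hmain := tendsto_sq_sum_rpow_div_add_sum_rpow_mul_rpow hβ (by linarith) hd hx
    (add_pos_of_nonneg_of_pos hL (inv_pos.mpr (by linarith))).ne'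
  have htail := (tendsto_rpow_mul_tsum_rpow_tail (by positivity : 0 < 2 * α)).comp hd
  refine (hmain.add htail).congr fun i => ?_
  simp only [Function.comp_apply]
  ring

theorem Filter.Tendsto.mul_rpow_of_tendsto_div_rpow {ι : Type*} {l : Filter ι}
    {f x D : ι → ℝ} {m γ c C L : ℝ} (hmγ : m * γ = c) (hL : 0 < L)
    (hf : Tendsto (fun i => f i * D i ^ c) l (𝓝 C))
    (hx : Tendsto (fun i => x i / D i ^ m) l (𝓝 L))
    (hD : ∀ᶠ i in l, 0 < D i) (hx0 : ∀ᶠ i in l, 0 ≤ x i) :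
    Tendsto (fun i => f i * x i ^ γ) l (𝓝 (C * L ^ γ)) := by
  refine (hf.mul (hx.rpow_const (Or.inl hL.ne'))).congr' ?_
  filter_upwards [hD, hx0] with i hDi hxi
  rw [Real.div_rpow hxi (by positivity), ← Real.rpow_mul hDi.le, hmγ]
  have : 0 < D i ^ c := by positivity
  field_simp

theorem inv_add_inv_mul_rpow_eq {α β : ℝ} (hα : 0 < α) (hβ : -1 < β) :
    ((β + 1)⁻¹ + (2 * α)⁻¹) * ((β + 1)⁻¹ - (2 * α + 2 * β + 2)⁻¹) ^ (α / (α + β + 1)) =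
      (2*α+β+1)/(2*α*(β+1)) * ((2*α+β+1)/(2*(β+1)*(α+β+1))) ^ (α / (α + β + 1)) := by
  have hβ1 : 0 < β + 1 := by linarith
  have hαβ1 : 0 < α + β + 1 := by linarith
  congr 1
  · field_simp
    ring
  · congr 1
    field_simp
    ring

/-- Sharp asymptotics of the optimal-allocation minimax linear risk over the Sobolev
hyperrectangle: with d = d_o(n) as in the optimal allocation,
R_o(n) = (Σ_{i≤d} i^β)²/(n + Σ_{i≤d} i^{2α+2β+1}) + Σ_{i>d} i^{−(2α+1)}
∼ B_H n^{−α/(α+β+1)}. -/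
theorem stmt9 (α β : ℝ) (hα : 0 < α) (hβ : -(1/2 : ℝ) < β)
    (dO : ℝ → ℕ)
    (hdO : ∀ n : ℝ, dO n = sSup {k : ℕ |
      ∑ i ∈ Finset.Icc 1 k, (i : ℝ) ^ β *
        ((k : ℝ) ^ (2*α + β + 1) - (i : ℝ) ^ (2*α + β + 1)) ≤ n})
    (R : ℝ → ℝ)
    (hR : ∀ n : ℝ, R n =
      (∑ i ∈ Finset.Icc 1 (dO n), (i : ℝ) ^ β) ^ 2 /
        (n + ∑ i ∈ Finset.Icc 1 (dO n), (i : ℝ) ^ (2*α + 2*β + 1)) +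
      ∑' j : ℕ, ((j : ℝ) + (dO n : ℝ) + 1) ^ (-(2*α + 1))) :
    Tendsto (fun n : ℝ => R n /
        (((2*α+β+1)/(2*α*(β+1))) * ((2*α+β+1)/(2*(β+1)*(α+β+1))) ^ (α/(α+β+1)) *
          n ^ (-(α/(α+β+1)))))
      atTop (nhds 1) := by
  have hβ' : -1 < β := by linarith
  have hαβ1 : 0 < α + β + 1 := by linarith
  set L := (β + 1)⁻¹ - (2 * α + 2 * β + 2)⁻¹ with hL
  have hLpos : 0 < L := sub_pos.mpr (inv_strictAnti₀ (by linarith) (by linarith))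
  have hthr := tendsto_budgetThreshold_div_rpow hβ' (p := 2 * α + β + 1) (by linarith)
  rw [show 2 * α + β + 1 + β + 1 = 2 * α + 2 * β + 2 by ring] at hthr
  have hdO' : dO = fun n => sSup {k | budgetThreshold β (2 * α + β + 1) k ≤ n} :=
    funext hdO
  have hd : Tendsto dO atTop atTop :=
    hdO' ▸ tendsto_sSup_setOf_le (tendsto_atTop_of_tendsto_div_rpow (by linarith) hLpos hthr)
  have hratio : Tendsto (fun n => n / (dO n : ℝ) ^ (2 * α + 2 * β + 2)) atTop (𝓝 L) :=
    hdO' ▸ tendsto_div_rpow_sSup_setOf_le (by linarith) hLpos hthr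
  have hrisk := tendsto_risk_mul_rpow hα hβ' hd hratio hLpos.le
  rw [hL, sub_add_cancel, sq, mul_div_cancel_right₀ _ (inv_ne_zero (by linarith))] at hrisk
  have hscaled := hrisk.mul_rpow_of_tendsto_div_rpow (γ := α / (α + β + 1))
    (by field_simp) hLpos hratio
    (hd.eventually_gt_atTop 0 |>.mono fun _ h => Nat.cast_pos.mpr h) (eventually_ge_atTop 0)
  have hC : 0 < ((β + 1)⁻¹ + (2 * α)⁻¹) * L ^ (α / (α + β + 1)) :=
    mul_pos (add_pos (inv_pos.mpr (by linarith)) (by positivity)) (Real.rpow_pos_of_pos hLpos _)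
  refine (div_self hC.ne' ▸ hscaled.div_const _).congr' ?_
  filter_upwards [eventually_gt_atTop 0] with n hn
  rw [hR n, hL, inv_add_inv_mul_rpow_eq hα hβ', Real.rpow_neg hn.le, ← div_eq_mul_inv,
    div_div_eq_mul_div]
end

section
/- Let α > 0, β > −1/2 and define t_s(n) as the solution of (Σ_k k^β [1 − t_s k^α]₊^{1/2}) · (Σ_i i^{α+β} [1 − t_s i^α]₊^{1/2}) = n t_s, with sums over positive integers. Then, as n → ∞, t_s(n) ∼ d_s^{−α} where d_s ∼ (α²(3α+2β+2) n / (2(β+1) B²((β+1)/α, 3/2)))^{1/(2(α+β+1))} and B denotes the Euler beta function. -/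
open Filter

/-- The Euler beta function B(x,y) = ∫₀¹ t^{x−1}(1−t)^{y−1} dt. -/
noncomputable def eulerBeta (x y : ℝ) : ℝ :=
  ∫ t in (0:ℝ)..1, t ^ (x - 1) * (1 - t) ^ (y - 1)

/-!
With `h = t ^ (1 / α)`, the scaled sum `t ^ ((γ + 1) / α) Σ_k (k + 1) ^ γ [1 - t (k + 1) ^ α]₊ ^ (1/2)`
is the Riemann sum `h Σ_k g (h (k + 1))` of `g u = u ^ γ [1 - u ^ α]₊ ^ (1/2)` (`pinskerProfile`).
It is the integral of the step function `x ↦ g (h ⌈x / h⌉)`, dominated near `0` by `x ^ γ + 1`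
(integrable as `γ > -1`), so dominated convergence gives the limit
`∫₀^∞ g = α⁻¹ B((γ + 1) / α, 3 / 2)` as `t → 0⁺`. Both sums decrease in `t`, so the defining
equation forces `t_s(n) → 0`; multiplying the limits for `γ = β` and `γ = α + β` shows that
`n t_s ^ (2 (α + β + 1) / α)` converges, and `B(x + 1, 3/2) = x / (x + 3/2) B(x, 3/2)` identifies
its limit with the inverse of the stated constant.
-/

open MeasureTheory Set Topology

lemma ofReal_eulerBeta (x y : ℝ) : (eulerBeta x y : ℂ) = Complex.betaIntegral x y := by
  rw [eulerBeta, Complex.betaIntegral, ← intervalIntegral.integral_ofReal]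
  refine intervalIntegral.integral_congr fun t ht => ?_
  rw [uIcc_of_le zero_le_one] at ht
  push_cast [Complex.ofReal_cpow ht.1, Complex.ofReal_cpow (sub_nonneg.2 ht.2)]
  rfl

lemma eulerBeta_eq_beta {x y : ℝ} (hx : 0 < x) (hy : 0 < y) :
    eulerBeta x y = ProbabilityTheory.beta x y := by
  rw [ProbabilityTheory.beta_eq_betaIntegralReal x y hx hy, ← ofReal_eulerBeta, Complex.ofReal_re]

lemma eulerBeta_pos {x y : ℝ} (hx : 0 < x) (hy : 0 < y) : 0 < eulerBeta x y :=
  eulerBeta_eq_beta hx hy ▸ ProbabilityTheory.beta_pos hx hy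

lemma eulerBeta_add_one {x y : ℝ} (hx : 0 < x) (hy : 0 < y) :
    eulerBeta (x + 1) y = x / (x + y) * eulerBeta x y := by
  rw [eulerBeta_eq_beta (by positivity) hy, eulerBeta_eq_beta hx hy, ProbabilityTheory.beta,
    ProbabilityTheory.beta, Real.Gamma_add_one hx.ne', add_right_comm,
    Real.Gamma_add_one (by positivity : x + y ≠ 0)]
  have := (Real.Gamma_pos_of_pos (add_pos hx hy)).ne'
  field_simp

lemma eulerBeta_mul_eulerBeta_add_one {α β : ℝ} (hα : 0 < α) (hβ : -1 < β) :
    α⁻¹ * eulerBeta ((β + 1) / α) (3 / 2) * (α⁻¹ * eulerBeta ((α + β + 1) / α) (3 / 2)) =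
      (α ^ 2 * (3 * α + 2 * β + 2) / (2 * (β + 1) * eulerBeta ((β + 1) / α) (3 / 2) ^ 2))⁻¹ := by
  have hx : 0 < (β + 1) / α := div_pos (by linarith) hα
  rw [show (α + β + 1) / α = (β + 1) / α + 1 by field_simp; ring,
    eulerBeta_add_one hx (by norm_num)]
  have : 3 * α + 2 * β + 2 ≠ 0 := by linarith
  field_simp
  ring

section RiemannSum

variable {h x : ℝ}

lemma le_mul_natCeil_div (hh : 0 < h) : x ≤ h * ⌈x / h⌉₊ := by
  rw [← div_le_iff₀' hh]; exact Nat.le_ceil _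

lemma mul_natCeil_div_lt (hh : 0 < h) (hx : 0 ≤ x) : h * ⌈x / h⌉₊ < x + h := by
  have := Nat.ceil_lt_add_one (div_nonneg hx hh.le)
  rwa [← mul_lt_mul_iff_right₀ hh, mul_add, mul_div_cancel₀ _ hh.ne', mul_one] at this

lemma integral_Ioi_comp_mul_natCeil_div {g : ℝ → ℝ} (hh : 0 < h)
    (hint : IntegrableOn (fun x => g (h * ⌈x / h⌉₊)) (Ioi 0)) :
    ∫ x in Ioi 0, g (h * ⌈x / h⌉₊) = ∑' k : ℕ, h * g (h * (k + 1)) := by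
  have hmono : Monotone fun k : ℕ => h * k := fun _ _ hij =>
    mul_le_mul_of_nonneg_left (Nat.cast_le.2 hij) hh.le
  have hunbdd : ¬BddAbove (range fun k : ℕ => h * k) :=
    not_bddAbove_of_tendsto_atTop (tendsto_natCast_atTop_atTop.const_mul_atTop hh)
  have hunion : ⋃ k : ℕ, Ioc (h * k) (h * (k + 1)) = Ioi 0 := by
    simpa using iUnion_Ioc_map_succ_eq_Ioi (fun k => hmono (Nat.zero_le k)) hunbdd
  have hdisj : Pairwise (Function.onFun Disjoint fun k : ℕ => Ioc (h * k) (h * (k + 1))) := by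
    simpa using hmono.pairwise_disjoint_on_Ioc_succ
  rw [← hunion, integral_iUnion (fun _ => measurableSet_Ioc) hdisj (hunion ▸ hint)]
  refine tsum_congr fun k => ?_
  have hceil : ∀ x ∈ Ioc (h * k) (h * (k + 1)), g (h * ⌈x / h⌉₊) = g (h * (k + 1)) := by
    intro x hx
    have : ⌈x / h⌉₊ = k + 1 := by
      rw [Nat.ceil_eq_iff k.succ_ne_zero, Nat.succ_sub_one, Nat.cast_succ, lt_div_iff₀ hh,
        div_le_iff₀ hh]
      constructor <;> linarith [hx.1, hx.2]
    rw [this, Nat.cast_succ]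
  rw [setIntegral_congr_fun measurableSet_Ioc hceil, setIntegral_const, measureReal_def,
    Real.volume_Ioc, ENNReal.toReal_ofReal (by nlinarith), smul_eq_mul]
  ring

end RiemannSum

theorem tendsto_tsum_mul_comp_mul_nhdsGT_zero {g G : ℝ → ℝ} (hmeas : Measurable g)
    (hcont : ∀ x, 0 < x → ContinuousAt g x) (hG : IntegrableOn G (Ioi 0))
    (hdom : ∀ x p, 0 < x → x ≤ p → p ≤ x + 1 → |g p| ≤ G x) :
    Tendsto (fun h => ∑' k : ℕ, h * g (h * (k + 1))) (𝓝[>] 0) (𝓝 (∫ x in Ioi 0, g x)) := by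
  set F : ℝ → ℝ → ℝ := fun h x => g (h * ⌈x / h⌉₊)
  have hFmeas : ∀ h, AEStronglyMeasurable (F h) (volume.restrict (Ioi 0)) := fun h =>
    (hmeas.comp (by fun_prop)).aestronglyMeasurable
  have hbound : ∀ h ∈ Ioc (0 : ℝ) 1, ∀ᵐ x ∂volume.restrict (Ioi 0), |F h x| ≤ G x := by
    intro h hh
    refine (ae_restrict_iff' measurableSet_Ioi).2 (Eventually.of_forall fun x (hx : 0 < x) => ?_)
    exact hdom x _ hx (le_mul_natCeil_div hh.1) (by linarith [mul_natCeil_div_lt hh.1 hx.le, hh.2])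
  have hlim : ∀ x, 0 < x → Tendsto (fun h => F h x) (𝓝[>] 0) (𝓝 (g x)) := by
    intro x hx
    refine (hcont x hx).tendsto.comp (tendsto_of_tendsto_of_tendsto_of_le_of_le' tendsto_const_nhds
      (f := fun h => h * ⌈x / h⌉₊) (h := fun h => x + h) ?_ ?_ ?_)
    · exact ((continuous_const_add x).tendsto' 0 x (add_zero x)).mono_left nhdsWithin_le_nhds
    · filter_upwards [self_mem_nhdsWithin] with h hh using le_mul_natCeil_div hh
    · filter_upwards [self_mem_nhdsWithin] with h hh using (mul_natCeil_div_lt hh hx.le).le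
  have hmem : Ioc (0 : ℝ) 1 ∈ 𝓝[>] 0 := Ioc_mem_nhdsGT zero_lt_one
  refine (tendsto_integral_filter_of_dominated_convergence G (Eventually.of_forall hFmeas)
    (eventually_of_mem hmem hbound) hG ((ae_restrict_iff' measurableSet_Ioi).2
      (Eventually.of_forall hlim))).congr' ?_
  filter_upwards [hmem] with h hh
  exact integral_Ioi_comp_mul_natCeil_div hh.1 (Integrable.mono' hG (hFmeas h) (hbound h hh))

noncomputable def pinskerProfile (α γ u : ℝ) : ℝ := u ^ γ * Real.sqrt (max (1 - u ^ α) 0)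

section Profile

variable {α γ u : ℝ}

lemma pinskerProfile_nonneg (hu : 0 ≤ u) : 0 ≤ pinskerProfile α γ u := by
  unfold pinskerProfile; positivity

lemma pinskerProfile_le_rpow (hu : 0 ≤ u) : pinskerProfile α γ u ≤ u ^ γ := by
  refine mul_le_of_le_one_right (by positivity) (Real.sqrt_le_one.2 (max_le ?_ zero_le_one))
  linarith [Real.rpow_nonneg hu α]

lemma pinskerProfile_of_one_le (hα : 0 < α) (hu : 1 ≤ u) : pinskerProfile α γ u = 0 := by
  rw [pinskerProfile, max_eq_right (by linarith [Real.one_le_rpow hu hα.le]), Real.sqrt_zero,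
    mul_zero]

lemma measurable_pinskerProfile : Measurable (pinskerProfile α γ) := by
  unfold pinskerProfile; fun_prop

lemma continuousAt_pinskerProfile (hu : 0 < u) : ContinuousAt (pinskerProfile α γ) u := by
  unfold pinskerProfile
  have := Real.continuousAt_rpow_const u α (Or.inl hu.ne')
  exact (Real.continuousAt_rpow_const u γ (Or.inl hu.ne')).mul
    ((continuousAt_const.sub this).max continuousAt_const).sqrt

lemma rpow_le_rpow_add_one {x p : ℝ} (hx : 0 < x) (hxp : x ≤ p) (hp : p ≤ 1) :
    p ^ γ ≤ x ^ γ + 1 := by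
  rcases le_or_gt γ 0 with hγ | hγ
  · linarith [Real.rpow_le_rpow_of_nonpos hx hxp hγ, zero_le_one' ℝ]
  · linarith [Real.rpow_le_one (hx.le.trans hxp) hp hγ.le, Real.rpow_nonneg hx.le γ]

lemma abs_pinskerProfile_le_indicator (hα : 0 < α) {x p : ℝ} (hx : 0 < x) (hxp : x ≤ p) :
    |pinskerProfile α γ p| ≤ (Ioc (0 : ℝ) 1).indicator (fun x => x ^ γ + 1) x := by
  rw [abs_of_nonneg (pinskerProfile_nonneg (hx.le.trans hxp))]
  rcases le_or_gt 1 p with hp | hp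
  · rw [pinskerProfile_of_one_le hα hp]
    exact indicator_nonneg (fun y hy => by positivity [hy.1.le]) x
  · rw [indicator_of_mem (mem_Ioc.2 ⟨hx, by linarith⟩)]
    exact (pinskerProfile_le_rpow (hx.le.trans hxp)).trans (rpow_le_rpow_add_one hx hxp hp.le)

lemma integrableOn_indicator_rpow_add_one (hγ : -1 < γ) :
    IntegrableOn ((Ioc (0 : ℝ) 1).indicator fun x => x ^ γ + 1) (Ioi 0) := by
  have hrpow : IntegrableOn (fun x : ℝ => x ^ γ) (Ioc (0 : ℝ) 1) :=
    ((intervalIntegral.integrableOn_Ioo_rpow_iff zero_lt_one).2 hγ).congr_set_ae Ioo_ae_eq_Ioc.symm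
  exact ((hrpow.add (integrableOn_const measure_Ioc_lt_top.ne)).integrable_indicator
    measurableSet_Ioc).integrableOn

end Profile

lemma integral_Ioi_rpow_mul_sqrt_eq_eulerBeta (x : ℝ) :
    ∫ s in Ioi (0 : ℝ), s ^ (x - 1) * Real.sqrt (max (1 - s) 0) = eulerBeta x (3 / 2) := by
  rw [setIntegral_eq_of_subset_of_forall_sdiff_eq_zero measurableSet_Ioi Ioc_subset_Ioi_self,
    eulerBeta, intervalIntegral.integral_of_le zero_le_one]
  · refine setIntegral_congr_fun measurableSet_Ioc fun s hs => ?_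
    rw [max_eq_left (by linarith [hs.2]), Real.sqrt_eq_rpow]
    norm_num
  · rintro s ⟨hs0, hs1⟩
    have : 1 < s := lt_of_not_ge fun h => hs1 ⟨hs0, h⟩
    rw [max_eq_right (by linarith), Real.sqrt_zero, mul_zero]

lemma integral_pinskerProfile {α γ : ℝ} (hα : 0 < α) :
    ∫ u in Ioi 0, pinskerProfile α γ u = α⁻¹ * eulerBeta ((γ + 1) / α) (3 / 2) := by
  rw [← integral_Ioi_rpow_mul_sqrt_eq_eulerBeta, ← integral_const_mul, ← integral_comp_rpow_Ioi
    (fun s => α⁻¹ * (s ^ ((γ + 1) / α - 1) * Real.sqrt (max (1 - s) 0))) hα.ne']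
  refine setIntegral_congr_fun measurableSet_Ioi fun u (hu : 0 < u) => ?_
  have hpow : u ^ (α - 1) * (u ^ α) ^ ((γ + 1) / α - 1) = u ^ γ := by
    rw [← Real.rpow_mul hu.le, ← Real.rpow_add hu]
    congr 1
    field_simp
    ring
  rw [pinskerProfile, smul_eq_mul, abs_of_pos hα, ← hpow]
  field_simp

lemma tendsto_rpow_nhdsGT_zero {p : ℝ} (hp : 0 < p) :
    Tendsto (fun t : ℝ => t ^ p) (𝓝[>] 0) (𝓝[>] 0) := by
  refine tendsto_nhdsWithin_iff.2
    ⟨?_, eventually_mem_nhdsWithin.mono fun t ht => Real.rpow_pos_of_pos ht _⟩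
  have := (Real.continuousAt_rpow_const 0 p (Or.inr hp.le)).tendsto
  rw [Real.zero_rpow hp.ne'] at this
  exact this.mono_left nhdsWithin_le_nhds

noncomputable def pinskerSum (α γ t : ℝ) : ℝ :=
  ∑' k : ℕ, ((k : ℝ) + 1) ^ γ * Real.sqrt (max (1 - t * ((k : ℝ) + 1) ^ α) 0)

section PinskerSum

variable {α γ t : ℝ}

lemma pinskerSum_nonneg : 0 ≤ pinskerSum α γ t :=
  tsum_nonneg fun _ => by positivity

lemma summable_pinskerSum (hα : 0 < α) (ht : 0 < t) :
    Summable fun k : ℕ => ((k : ℝ) + 1) ^ γ * Real.sqrt (max (1 - t * ((k : ℝ) + 1) ^ α) 0) := by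
  have hlarge : ∀ᶠ k : ℕ in cofinite, 1 ≤ t * ((k : ℝ) + 1) ^ α := by
    rw [Nat.cofinite_eq_atTop]
    exact (((tendsto_rpow_atTop hα).comp (tendsto_natCast_atTop_atTop.atTop_add
      tendsto_const_nhds)).const_mul_atTop ht).eventually_ge_atTop 1
  refine summable_of_hasFiniteSupport (eventually_cofinite.1 (hlarge.mono fun k hk => ?_))
  simp only [max_eq_right (sub_nonpos.2 hk), Real.sqrt_zero, mul_zero]

lemma pinskerSum_antitoneOn (hα : 0 < α) : AntitoneOn (pinskerSum α γ) (Ioi 0) := by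
  intro s (hs : 0 < s) t (ht : 0 < t) hst
  refine (summable_pinskerSum hα ht).tsum_le_tsum (fun k => ?_) (summable_pinskerSum hα hs)
  gcongr

lemma pinskerSum_mul_pinskerSum_antitoneOn (hα : 0 < α) {δ : ℝ} :
    AntitoneOn (fun t => pinskerSum α γ t * pinskerSum α δ t) (Ioi 0) :=
  fun _ hs _ ht hst => mul_le_mul (pinskerSum_antitoneOn hα hs ht hst)
    (pinskerSum_antitoneOn hα hs ht hst) pinskerSum_nonneg pinskerSum_nonneg

lemma rpow_mul_pinskerSum (hα : 0 < α) (ht : 0 < t) :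
    t ^ ((γ + 1) / α) * pinskerSum α γ t =
      ∑' k : ℕ, t ^ (1 / α) * pinskerProfile α γ (t ^ (1 / α) * (k + 1)) := by
  rw [pinskerSum, ← tsum_mul_left]
  refine tsum_congr fun k => ?_
  have hh : 0 < t ^ (1 / α) := Real.rpow_pos_of_pos ht _
  have hk : (0 : ℝ) < k + 1 := by positivity
  have hscale : (t ^ (1 / α)) ^ α = t := by
    rw [← Real.rpow_mul ht.le, one_div_mul_cancel hα.ne', Real.rpow_one]
  have hexp : t ^ ((γ + 1) / α) = t ^ (1 / α) * (t ^ (1 / α)) ^ γ := by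
    rw [← Real.rpow_mul ht.le, ← Real.rpow_add ht]
    congr 1
    ring
  rw [pinskerProfile, Real.mul_rpow hh.le hk.le, Real.mul_rpow hh.le hk.le, hscale, hexp]
  ring

theorem tendsto_rpow_mul_pinskerSum (hα : 0 < α) (hγ : -1 < γ) :
    Tendsto (fun t => t ^ ((γ + 1) / α) * pinskerSum α γ t) (𝓝[>] 0)
      (𝓝 (α⁻¹ * eulerBeta ((γ + 1) / α) (3 / 2))) := by
  have hriemann := tendsto_tsum_mul_comp_mul_nhdsGT_zero measurable_pinskerProfile
    (fun _ => continuousAt_pinskerProfile) (integrableOn_indicator_rpow_add_one hγ)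
    (fun _ _ hx hxp _ => abs_pinskerProfile_le_indicator hα hx hxp)
  rw [integral_pinskerProfile hα] at hriemann
  refine (hriemann.comp (tendsto_rpow_nhdsGT_zero (one_div_pos.2 hα))).congr' ?_
  filter_upwards [self_mem_nhdsWithin] with t ht
  exact (rpow_mul_pinskerSum hα ht).symm

lemma rpow_mul_pinskerSum_mul_rpow_mul_pinskerSum {β n : ℝ} (hα : α ≠ 0) (ht : 0 < t)
    (heq : pinskerSum α β t * pinskerSum α (α + β) t = n * t) :
    t ^ ((β + 1) / α) * pinskerSum α β t * (t ^ ((α + β + 1) / α) * pinskerSum α (α + β) t) =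
      n * t ^ (2 * (α + β + 1) / α) := by
  have hexp : t ^ (2 * (α + β + 1) / α) = t ^ ((β + 1) / α) * t ^ ((α + β + 1) / α) * t := by
    rw [← Real.rpow_add ht, ← Real.rpow_add_one ht.ne']
    congr 1
    field_simp
    ring
  rw [hexp]
  linear_combination t ^ ((β + 1) / α) * t ^ ((α + β + 1) / α) * heq

end PinskerSum

theorem tendsto_nhdsGT_zero_of_eq_mul {P ts : ℝ → ℝ} (hP : AntitoneOn P (Ioi 0))
    (hts : ∀ n, 0 < n → 0 < ts n ∧ P (ts n) = n * ts n) :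
    Tendsto ts atTop (𝓝[>] 0) := by
  have hpos : ∀ᶠ n in atTop, 0 < ts n :=
    (eventually_gt_atTop 0).mono fun n hn => (hts n hn).1
  refine tendsto_nhdsWithin_iff.2 ⟨tendsto_order.2 ⟨fun a ha => hpos.mono fun n hn => ha.trans hn,
    fun ε hε => ?_⟩, hpos⟩
  filter_upwards [eventually_gt_atTop (max 0 (P ε / ε))] with n hn
  obtain ⟨-, heq⟩ := hts n ((le_max_left _ _).trans_lt hn)
  by_contra! hεt
  have hle : n * ε ≤ P ε := calc
    n * ε ≤ n * ts n := by gcongr; exact (le_max_left _ _).trans hn.le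
    _ = P (ts n) := heq.symm
    _ ≤ P ε := hP hε (hε.trans_le hεt) hεt
  rw [max_lt_iff, div_lt_iff₀ hε] at hn
  linarith [hn.2]

lemma tendsto_div_rpow_rpow_neg {ts b : ℝ → ℝ} {e p α : ℝ} (he : e * (p * α) = 1)
    (hb : ∀ᶠ n in atTop, 0 < b n) (hts : ∀ᶠ n in atTop, 0 < ts n)
    (h : Tendsto (fun n => b n * ts n ^ e) atTop (𝓝 1)) :
    Tendsto (fun n => ts n / (b n ^ p) ^ (-α)) atTop (𝓝 1) := by
  have := h.rpow_const (p := p * α) (Or.inl one_ne_zero)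
  rw [Real.one_rpow] at this
  refine this.congr' ?_
  filter_upwards [hb, hts] with n hbn htn
  rw [Real.mul_rpow hbn.le (by positivity), ← Real.rpow_mul htn.le, he, Real.rpow_one,
    ← Real.rpow_mul hbn.le, mul_neg, Real.rpow_neg hbn.le, div_inv_eq_mul, mul_comm]

/-- Asymptotics of the sub-optimal Pinsker parameter for Sobolev ellipsoids: if
t_s(n) > 0 solves (Σ_k k^β[1 − t_s k^α]₊^{1/2})(Σ_i i^{α+β}[1 − t_s i^α]₊^{1/2}) = n t_s,
then t_s(n) ∼ d_s(n)^{−α} with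
d_s(n) = (α²(3α+2β+2)n / (2(β+1)B²((β+1)/α, 3/2)))^{1/(2(α+β+1))}. -/
theorem stmt16 (α β : ℝ) (hα : 0 < α) (hβ : -(1/2 : ℝ) < β)
    (ts : ℝ → ℝ)
    (hts : ∀ n : ℝ, 0 < n → 0 < ts n ∧
      (∑' k : ℕ, ((k : ℝ) + 1) ^ β * Real.sqrt (max (1 - ts n * ((k : ℝ) + 1) ^ α) 0)) *
      (∑' i : ℕ, ((i : ℝ) + 1) ^ (α + β) *
          Real.sqrt (max (1 - ts n * ((i : ℝ) + 1) ^ α) 0)) = n * ts n) :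
    Tendsto (fun n : ℝ => ts n /
        ((α^2 * (3*α + 2*β + 2) * n /
            (2*(β+1) * (eulerBeta ((β+1)/α) (3/2))^2)) ^ (1/(2*(α+β+1)))) ^ (-α))
      atTop (nhds 1) := by
  have hβ' : -1 < β := by linarith
  set c := α ^ 2 * (3 * α + 2 * β + 2) / (2 * (β + 1) * eulerBeta ((β + 1) / α) (3 / 2) ^ 2)
  have hc : 0 < c := div_pos (mul_pos (by positivity) (by linarith))
    (mul_pos (by linarith) (pow_pos (eulerBeta_pos (div_pos (by linarith) hα) (by norm_num)) 2))
  have hts0 : Tendsto ts atTop (𝓝[>] 0) :=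
    tendsto_nhdsGT_zero_of_eq_mul (pinskerSum_mul_pinskerSum_antitoneOn hα) hts
  have hprod := (((tendsto_rpow_mul_pinskerSum hα hβ').comp hts0).mul
    ((tendsto_rpow_mul_pinskerSum hα (by linarith : -1 < α + β)).comp hts0)).const_mul c
  rw [eulerBeta_mul_eulerBeta_add_one hα hβ', mul_inv_cancel₀ hc.ne'] at hprod
  have hαβ : α + β + 1 ≠ 0 := by linarith
  refine tendsto_div_rpow_rpow_neg (e := 2 * (α + β + 1) / α) (by field_simp)
    ((eventually_gt_atTop 0).mono fun n hn => by rw [mul_div_right_comm]; exact mul_pos hc hn)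
    ((eventually_gt_atTop 0).mono fun n hn => (hts n hn).1) (hprod.congr' ?_)
  filter_upwards [eventually_gt_atTop 0] with n hn
  obtain ⟨htn, heq⟩ := hts n hn
  rw [Function.comp_apply, Function.comp_apply,
    rpow_mul_pinskerSum_mul_rpow_mul_pinskerSum hα.ne' htn heq]
  ring
end
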